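/- Let M be a matroid with non-negative weights w', let B be its maximum-weight basis, and for an independent set S let R(S) denote the maximum-weight subset of B completing S to a basis. Then for any disjoint sets A, V with A ∪ V independent: Σ_{x ∈ V} [w'(R(A)) - w'(R(A ∪ {x}))] ≤ w'(R(A)). -/

import Mathlib

/-!
`R(A)` is a base of `M ／ A` and `V` is independent there. Repeating the symmetric exchange
property of bases along `V` yields an injection `f : V → R(A)` such that every
`A ∪ {x} ∪ (R(A) \ {f x})` is a base; so `R(A) \ {f x}` competes for `R(A ∪ {x})`, and the loss at
`x` is at most `w'(f x)`. Summing over `V`, injectivity and nonnegativity of the weights bound the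
total loss by `w'(R(A))`.
-/

open Set

section finsum

variable {α M : Type*} [AddCommMonoid M] [PartialOrder M] [IsOrderedAddMonoid M] {f g : α → M}
  {s t : Set α}

theorem finsum_mem_le_finsum_mem (hs : s.Finite) (h : ∀ x ∈ s, f x ≤ g x) :
    ∑ᶠ x ∈ s, f x ≤ ∑ᶠ x ∈ s, g x := by
  rw [finsum_mem_eq_finite_toFinset_sum _ hs, finsum_mem_eq_finite_toFinset_sum _ hs]
  exact Finset.sum_le_sum fun x hx ↦ h x (hs.mem_toFinset.1 hx)

theorem finsum_mem_le_finsum_mem_of_subset (ht : t.Finite) (hst : s ⊆ t)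
    (hf : ∀ x ∈ t \ s, 0 ≤ f x) : ∑ᶠ x ∈ s, f x ≤ ∑ᶠ x ∈ t, f x := by
  have hts : (t \ s).Finite := ht.subset sdiff_subset
  rw [← finsum_mem_add_sdiff hst ht, finsum_mem_eq_finite_toFinset_sum _ hts]
  exact le_add_of_nonneg_right (Finset.sum_nonneg fun x hx ↦ hf x (hts.mem_toFinset.1 hx))

end finsum

namespace Matroid

variable {α : Type*} {M : Matroid α} {B₁ B₂ : Set α} {y : α}

theorem IsBase.exists_symm_exchange (hB₁ : M.IsBase B₁) (hB₂ : M.IsBase B₂)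
    (hy : y ∈ B₂ \ B₁) :
    ∃ e ∈ B₁ \ B₂, M.IsBase (insert y (B₁ \ {e})) ∧ M.IsBase (insert e (B₂ \ {y})) := by
  have hyE : y ∈ M.E := hB₂.subset_ground hy.1
  have hyB₁ : y ∈ M.closure B₁ := by rw [hB₁.closure_eq]; exact hyE
  set C := M.fundCircuit y B₁
  have hC : M.IsCircuit C := hB₁.fundCircuit_isCircuit hyE hy.2
  -- `C \ {y}` spans `y` but `B₂ \ {y}` does not, so some `e ∈ C \ {y}` escapes `cl(B₂ \ {y})`.
  obtain ⟨e, ⟨heC, hey⟩, he⟩ : ∃ e ∈ C \ {y}, e ∉ M.closure (B₂ \ {y}) := by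
    by_contra! h
    exact hB₂.indep.notMem_closure_sdiff_of_mem hy.1
      (M.closure_subset_closure_of_subset_closure h (hC.mem_closure_sdiff_singleton_of_mem
        (M.mem_fundCircuit y B₁)))
  have heB₁ : e ∈ B₁ := (M.fundCircuit_subset_insert y B₁ heC).resolve_left hey
  have heB₂ : e ∉ B₂ := fun h ↦
    he (M.subset_closure _ (sdiff_subset.trans hB₂.subset_ground) ⟨h, hey⟩)
  refine ⟨e, ⟨heB₁, heB₂⟩, ?_,
    hB₂.exchange_base_of_notMem_closure hy.1 he (hB₁.subset_ground heB₁)⟩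
  rw [insert_sdiff_singleton_comm (Ne.symm hey)]
  exact hB₁.exchange_isBase_of_indep' heB₁ hy.2
    ((hB₁.indep.mem_fundCircuit_iff hyB₁ hy.2).1 heC)

theorem IsBase.exists_exchange_of_mem (hB₁ : M.IsBase B₁) (hB₂ : M.IsBase B₂) (hy : y ∈ B₂) :
    ∃ e ∈ B₁ \ (B₂ \ {y}), y ∉ B₁ \ {e} ∧
      M.IsBase (insert y (B₁ \ {e})) ∧ M.IsBase (insert e (B₂ \ {y})) := by
  by_cases hyB₁ : y ∈ B₁
  · refine ⟨y, ⟨hyB₁, fun h ↦ h.2 rfl⟩, fun h ↦ h.2 rfl, ?_, ?_⟩ <;>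
      simpa [insert_eq_of_mem, hyB₁, hy]
  · obtain ⟨e, he, hB₁', hB₂'⟩ := hB₁.exists_symm_exchange hB₂ ⟨hy, hyB₁⟩
    exact ⟨e, ⟨he.1, fun h ↦ he.2 h.1⟩, fun h ↦ hyB₁ h.1, hB₁', hB₂'⟩

theorem IsBase.exists_injOn_exchange (hB₁ : M.IsBase B₁) (hB₂ : M.IsBase B₂) {V : Set α}
    (hV : V.Finite) (hVB₂ : V ⊆ B₂) :
    ∃ f : α → α, InjOn f V ∧ MapsTo f V (B₁ \ (B₂ \ V)) ∧
      ∀ y ∈ V, y ∉ B₁ \ {f y} ∧ M.IsBase (insert y (B₁ \ {f y})) := by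
  classical
  induction V, hV using Set.Finite.induction_on generalizing B₂ with
  | empty => exact ⟨id, injOn_empty _, mapsTo_empty _ _, fun _ h ↦ h.elim⟩
  | @insert y s hys hs ih =>
    obtain ⟨e, ⟨heB₁, heB₂⟩, hye, hB₁', hB₂'⟩ :=
      hB₁.exists_exchange_of_mem hB₂ (hVB₂ (mem_insert y s))
    have hsB₂' : s ⊆ insert e (B₂ \ {y}) := fun x hx ↦
      .inr ⟨hVB₂ (mem_insert_of_mem y hx), fun h ↦ hys (h ▸ hx)⟩
    obtain ⟨g, hg_inj, hg_maps, hg⟩ := ih hB₂' hsB₂'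
    have hes : e ∉ s := fun h ↦ heB₂ ⟨hVB₂ (mem_insert_of_mem y h), fun h' ↦ hys (h' ▸ h)⟩
    have hfg : EqOn (Function.update g y e) g s := fun x hx ↦
      Function.update_of_ne (ne_of_mem_of_not_mem hx hys) _ _
    refine ⟨Function.update g y e, ?_, ?_, ?_⟩
    · rw [injOn_insert hys, hfg.image_eq, Function.update_self]
      exact ⟨hg_inj.congr hfg.symm,
        fun ⟨x, hx, hgx⟩ ↦ (hg_maps hx).2 (hgx.symm ▸ ⟨mem_insert e _, hes⟩)⟩
    · rintro x (rfl | hx)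
      · rw [Function.update_self]
        exact ⟨heB₁, fun h ↦ heB₂ ⟨h.1, fun hey ↦ h.2 (.inl hey)⟩⟩
      · rw [hfg hx]
        exact ⟨(hg_maps hx).1, fun h ↦ (hg_maps hx).2
          ⟨.inr ⟨h.1, fun hxy ↦ h.2 (.inl hxy)⟩, fun hxs ↦ h.2 (.inr hxs)⟩⟩
    · rw [forall_mem_insert, Function.update_self]
      exact ⟨⟨hye, hB₁'⟩, fun x hx ↦ hfg hx ▸ hg x hx⟩

def IsMaxWeightCompletion (M : Matroid α) (w : α → ℝ) (B S R : Set α) : Prop :=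
  R ⊆ B ∧ Disjoint R S ∧ M.IsBase (S ∪ R) ∧
    ∀ R', R' ⊆ B → Disjoint R' S → M.IsBase (S ∪ R') → ∑ᶠ e ∈ R', w e ≤ ∑ᶠ e ∈ R, w e

variable {w : α → ℝ} {B S R R' : Set α} {e : α}

theorem IsMaxWeightCompletion.sub_le_of_exchange (hR : M.IsMaxWeightCompletion w B S R)
    (hR' : M.IsMaxWeightCompletion w B (S ∪ {y}) R') (hfin : R.Finite) (he : e ∈ R)
    (hy : y ∉ (S ∪ R) \ {e}) (hbase : M.IsBase (insert y ((S ∪ R) \ {e}))) :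
    ∑ᶠ x ∈ R, w x - ∑ᶠ x ∈ R', w x ≤ w e := by
  have heS : e ∉ S := hR.2.1.notMem_of_mem_left he
  have hsplit : w e + ∑ᶠ x ∈ R \ {e}, w x = ∑ᶠ x ∈ R, w x := by
    rw [← finsum_mem_singleton (f := w) (a := e),
      finsum_mem_add_sdiff (singleton_subset_iff.2 he) hfin]
  have hdisj : Disjoint (R \ {e}) (S ∪ {y}) := by
    rw [disjoint_union_right, disjoint_singleton_right]
    exact ⟨hR.2.1.mono_left sdiff_subset, fun h ↦ hy ⟨.inr h.1, h.2⟩⟩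
  have hset : S ∪ {y} ∪ R \ {e} = insert y ((S ∪ R) \ {e}) := by
    ext x
    simp only [mem_union, mem_insert_iff, mem_sdiff, mem_singleton_iff]
    grind
  have := hR'.2.2.2 (R \ {e}) (sdiff_subset.trans hR.1) hdisj (hset ▸ hbase)
  linarith

end Matroid

open Matroid

theorem stmt9_general {α : Type*} (M : Matroid α) [M.Finite] (w' : α → ℝ)
    (hw'nonneg : ∀ e, 0 ≤ w' e)
    (B : Set α)
    (R : Set α → Set α)
    (hR : ∀ S, M.Indep S →
      R S ⊆ B ∧ Disjoint (R S) S ∧ M.IsBase (S ∪ R S) ∧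
      ∀ R', R' ⊆ B → Disjoint R' S → M.IsBase (S ∪ R') →
        ∑ᶠ e ∈ R', w' e ≤ ∑ᶠ e ∈ R S, w' e)
    (A V : Set α) (hdisj : Disjoint A V) (hAV : M.Indep (A ∪ V)) :
    ∑ᶠ x ∈ V, ((∑ᶠ e ∈ R A, w' e) - ∑ᶠ e ∈ R (A ∪ {x}), w' e) ≤ ∑ᶠ e ∈ R A, w' e := by
  have hRA : M.IsMaxWeightCompletion w' B A (R A) := hR A (hAV.subset subset_union_left)
  have hARA : M.IsBase (A ∪ R A) := hRA.2.2.1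
  have hVfin : V.Finite := M.set_finite V (subset_union_right.trans hAV.subset_ground)
  obtain ⟨B₂, hB₂, hAVB₂⟩ := hAV.exists_isBase_superset
  obtain ⟨f, hf_inj, hf_maps, hf_exch⟩ :=
    hARA.exists_injOn_exchange hB₂ hVfin (subset_union_right.trans hAVB₂)
  have hfR : MapsTo f V (R A) := fun x hx ↦ (hf_maps hx).1.resolve_left fun hA ↦
    (hf_maps hx).2 ⟨hAVB₂ (.inl hA), hdisj.notMem_of_mem_left hA⟩
  have hRfin : (R A).Finite := M.set_finite _ (subset_union_right.trans hARA.subset_ground)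
  calc ∑ᶠ x ∈ V, ((∑ᶠ e ∈ R A, w' e) - ∑ᶠ e ∈ R (A ∪ {x}), w' e)
      ≤ ∑ᶠ x ∈ V, w' (f x) := finsum_mem_le_finsum_mem hVfin fun x hx ↦
        hRA.sub_le_of_exchange (hR _ (hAV.subset (union_subset_union_right A
          (singleton_subset_iff.2 hx)))) hRfin (hfR hx) (hf_exch x hx).1 (hf_exch x hx).2
    _ = ∑ᶠ e ∈ f '' V, w' e := (finsum_mem_image hf_inj).symm
    _ ≤ ∑ᶠ e ∈ R A, w' e :=
      finsum_mem_le_finsum_mem_of_subset hRfin hfR.image_subset fun e _ ↦ hw'nonneg e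

/-- For disjoint sets `A, V` with `A ∪ V` independent, the marginal losses of the max-weight
completion `R(·)` satisfy `Σ_{x ∈ V} [w'(R(A)) - w'(R(A ∪ {x}))] ≤ w'(R(A))`. -/
theorem stmt9 {α : Type*} (M : Matroid α) [M.Finite] (w' : α → ℝ)
    (hw'nonneg : ∀ e, 0 ≤ w' e)
    (B : Set α) (hB : M.IsBase B)
    (hBmax : ∀ B', M.IsBase B' → ∑ᶠ e ∈ B', w' e ≤ ∑ᶠ e ∈ B, w' e)
    (R : Set α → Set α)
    (hR : ∀ S, M.Indep S →
      R S ⊆ B ∧ Disjoint (R S) S ∧ M.IsBase (S ∪ R S) ∧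
      ∀ R', R' ⊆ B → Disjoint R' S → M.IsBase (S ∪ R') →
        ∑ᶠ e ∈ R', w' e ≤ ∑ᶠ e ∈ R S, w' e)
    (A V : Set α) (hdisj : Disjoint A V) (hAV : M.Indep (A ∪ V)) :
    ∑ᶠ x ∈ V, ((∑ᶠ e ∈ R A, w' e) - ∑ᶠ e ∈ R (A ∪ {x}), w' e) ≤ ∑ᶠ e ∈ R A, w' e :=
  stmt9_general M w' hw'nonneg B R hR A V hdisj hAV
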